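/- Let G be a finite connected graph with radius r and diameter d such that d ≤ 2r - 2. Then the circumference of G is at least 4r - 2d ≥ 4 (in particular G has a cycle of length at least 4). -/

import Mathlib

open SimpleGraph

/-- The eccentricity of a vertex: the maximum distance to any other vertex. -/
noncomputable def ecc {V : Type*} [Fintype V] (G : SimpleGraph V) (u : V) : ℕ :=
  Finset.univ.sup (G.dist u)

/-- The radius of a graph: the minimum eccentricity. -/
noncomputable def rad {V : Type*} [Fintype V] (G : SimpleGraph V) : ℕ :=
  sInf (Set.range (ecc G))

/-- The diameter of a graph: the maximum eccentricity. -/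
noncomputable def diamG {V : Type*} [Fintype V] (G : SimpleGraph V) : ℕ :=
  Finset.univ.sup (ecc G)

/-- A cut-vertex: a vertex whose removal disconnects the graph. -/
def IsCutVertex {V : Type*} (G : SimpleGraph V) (v : V) : Prop :=
  ¬ (G.induce {w | w ≠ v}).Connected

/-!
Let `z` be a central vertex and `x` a vertex at distance `r` from it, and suppose every cycle
has length less than `4r - 2d`. A closed walk through two vertices is at least twice as long as
their distance, so any two vertices on a common cycle are at distance less than `k = 2r - d`;
in particular `z` and `x` are not. A local form of Menger's theorem (two vertices at distance at
least `2` with no separating vertex lie on a common cycle) then yields, by descent along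
separators, a vertex `c ∉ {z, x}` through which every `z`–`x` walk passes and with
`dist z c < k`. Let `u` be a vertex at distance `ecc c ≥ r` from `c`. If `c` separates `z` from
`u`, then `dist z u > r`, contradicting `ecc z = r`. Otherwise `c` separates `x` from `u`, so
`dist x c ≤ d - r` and hence `dist z c = r - dist c x ≥ k`.
-/

section Eccentricity

variable {V : Type*} [Fintype V] (G : SimpleGraph V)

lemma dist_le_ecc (u v : V) : G.dist u v ≤ ecc G u :=
  Finset.le_sup (Finset.mem_univ v)

lemma ecc_le_diamG (u : V) : ecc G u ≤ diamG G :=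
  Finset.le_sup (Finset.mem_univ u)

lemma rad_le_ecc (u : V) : rad G ≤ ecc G u :=
  Nat.sInf_le ⟨u, rfl⟩

lemma exists_ecc_eq_rad [Nonempty V] : ∃ z, ecc G z = rad G :=
  Nat.sInf_mem (Set.range_nonempty _)

lemma exists_dist_eq_ecc [Nonempty V] (u : V) : ∃ v, G.dist u v = ecc G u := by
  obtain ⟨v, -, hv⟩ := Finset.exists_mem_eq_sup Finset.univ Finset.univ_nonempty (G.dist u)
  exact ⟨v, hv.symm⟩

end Eccentricity

namespace SimpleGraph

variable {V : Type*} {G : SimpleGraph V}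

def Separates (G : SimpleGraph V) (s u v : V) : Prop :=
  ∀ p : G.Walk u v, s ∈ p.support

def OnCommonCycle (G : SimpleGraph V) (u v : V) : Prop :=
  ∃ (a : V) (c : G.Walk a a), c.IsCycle ∧ u ∈ c.support ∧ v ∈ c.support

namespace Walk

lemma two_mul_dist_le_length {a u v : V} (c : G.Walk a a)
    (hu : u ∈ c.support) (hv : v ∈ c.support) : 2 * G.dist u v ≤ c.length := by
  classical
  have hv' : v ∈ (c.rotate u hu).support := (c.mem_support_rotate_iff u hu).mpr hv
  have hsplit := congrArg length ((c.rotate u hu).take_spec hv')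
  rw [length_append, length_rotate] at hsplit
  have h₁ := dist_le ((c.rotate u hu).takeUntil v hv')
  have h₂ := dist_le ((c.rotate u hu).dropUntil v hv')
  rw [dist_comm] at h₂
  omega

lemma IsPath.append_of_support_inter {u v w : V} {p : G.Walk u v} {q : G.Walk v w}
    (hp : p.IsPath) (hq : q.IsPath) (hpq : ∀ t ∈ p.support, t ∈ q.support → t = v) :
    (p.append q).IsPath := by
  have hq' := hq.support_nodup
  rw [← cons_tail_support q, List.nodup_cons] at hq'
  rw [isPath_def, support_append]
  refine hp.support_nodup.append hq'.2 fun t htp htq => ?_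
  obtain rfl := hpq t htp (List.mem_of_mem_tail htq)
  exact hq'.1 htq

lemma exists_first_mem (S : Set V) : ∀ {x y : V} (p : G.Walk x y), y ∈ S →
    ∃ z ∈ S, ∃ q : G.Walk x z, (∀ t ∈ q.support, t ∈ S → t = z) ∧ q.support ⊆ p.support
  | _, _, nil, hy => ⟨_, hy, nil, by simp, by simp⟩
  | x, _, cons h p, hy => by
    by_cases hx : x ∈ S
    · exact ⟨x, hx, nil, by simp, by simp⟩
    · obtain ⟨z, hz, q, hfirst, hsub⟩ := exists_first_mem S p hy
      refine ⟨z, hz, cons h q, ?_, List.cons_subset_cons _ hsub⟩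
      intro t ht htS
      rcases List.mem_cons.mp (support_cons h q ▸ ht) with rfl | ht
      · exact absurd htS hx
      · exact hfirst t ht htS

lemma IsCycle.exists_isPath_mem_support {a y w u : V}
    {c : G.Walk a a} (hc : c.IsCycle) (hy : y ∈ c.support) (hw : w ∈ c.support)
    (hu : u ∈ c.support) (hyw : y ≠ w) :
    ∃ p : G.Walk y w, p.IsPath ∧ u ∈ p.support ∧ ∀ t ∈ p.support, t ∈ c.support := by
  classical
  set c' := c.rotate y hy
  have hmem (t : V) : t ∈ c'.support ↔ t ∈ c.support := c.mem_support_rotate_iff y hy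
  have hw' : w ∈ c'.support := (hmem w).mpr hw
  have hc' : ((c'.takeUntil w hw').append (c'.dropUntil w hw')).IsCycle := by
    rw [take_spec]; exact hc.rotate hy
  have hu' : u ∈ (c'.takeUntil w hw').support ∨ u ∈ (c'.dropUntil w hw').support := by
    rw [← mem_support_append_iff, take_spec]; exact (hmem u).mpr hu
  rcases hu' with hu' | hu'
  · refine ⟨_, hc'.isPath_of_append_left (not_nil_of_ne hyw.symm), hu', fun t ht => ?_⟩
    exact (hmem t).mp (c'.support_takeUntil_subset_support hw' ht)
  · refine ⟨_, (hc'.isPath_of_append_right (not_nil_of_ne hyw)).reverse, by simpa using hu',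
      fun t ht => ?_⟩
    rw [support_reverse, List.mem_reverse] at ht
    exact (hmem t).mp (c'.support_dropUntil_subset_support hw' ht)

end Walk

lemma Reachable.exists_adj_dist_add_one {u v : V} (huv : G.Reachable u v) (hne : u ≠ v) :
    ∃ w, G.Adj w v ∧ G.dist u w + 1 = G.dist u v := by
  obtain ⟨p, hp⟩ := huv.symm.exists_walk_length_eq_dist
  cases p with
  | nil => exact absurd rfl hne
  | cons h q =>
    refine ⟨_, h.symm, ?_⟩
    have hq := dist_le q
    have htri := h.reachable.dist_triangle_left u
    rw [Walk.length_cons] at hp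
    rw [dist_eq_one_iff_adj.mpr h] at htri
    rw [dist_comm, dist_comm (u := u)]
    omega

namespace Separates

lemma dist_eq_add {s u v : V} (hs : G.Separates s u v) (huv : G.Reachable u v) :
    G.dist u v = G.dist u s + G.dist s v := by
  classical
  obtain ⟨p, hp⟩ := huv.exists_walk_length_eq_dist
  have hsplit := congrArg Walk.length (p.take_spec (hs p))
  rw [Walk.length_append] at hsplit
  have h₁ := dist_le (p.takeUntil s (hs p))
  have h₂ := dist_le (p.dropUntil s (hs p))
  have h₃ := (p.takeUntil s (hs p)).reachable.dist_triangle_left v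
  omega

lemma trans {s c u v : V} (hs : G.Separates s u c) (hc : G.Separates c u v) :
    G.Separates s u v := by
  classical
  exact fun p => p.support_takeUntil_subset_support (hc p) (hs _)

lemma of_not_separates {c u v w : V} (hc : G.Separates c u v) (hw : ¬ G.Separates c u w) :
    G.Separates c v w := by
  intro p
  obtain ⟨q, hq⟩ : ∃ q : G.Walk u w, c ∉ q.support := by simpa [Separates] using hw
  have := hc (q.append p.reverse)
  simp_all [Walk.mem_support_append_iff]

end Separates

/-- The cycle runs from `v` along `R` to its first vertex `y` in `S`, then along an arc from `y`
through `u` to `w`, and back to `v`. -/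
lemma onCommonCycle_of_arcs {S : Set V} {u v w x : V} (hwv : G.Adj w v) (hvS : v ∉ S)
    (harc : ∀ y ∈ S, y ≠ w →
      ∃ A : G.Walk y w, A.IsPath ∧ u ∈ A.support ∧ ∀ t ∈ A.support, t ∈ S)
    (R : G.Walk v x) (hxS : x ∈ S) (hwR : w ∉ R.support) : G.OnCommonCycle u v := by
  classical
  obtain ⟨y, hyS, R', hfirst, hsub⟩ := R.exists_first_mem S hxS
  have hP := R'.bypass_isPath
  have hPS (t : V) (ht : t ∈ R'.bypass.support) : t ∈ S → t = y :=
    hfirst t (R'.support_bypass_subset_support ht)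
  have hwP : w ∉ R'.bypass.support := fun h => hwR (hsub (R'.support_bypass_subset_support h))
  have hyw : y ≠ w := by rintro rfl; exact hwP R'.bypass.end_mem_support
  obtain ⟨A, hA, huA, hAS⟩ := harc y hyS hyw
  have hPA := hP.append_of_support_inter hA fun t htP htA => hPS t htP (hAS t htA)
  have hedge : s(w, v) ∉ (R'.bypass.append A).edges := by
    rw [Walk.edges_append, List.mem_append]
    rintro (h | h)
    · exact hwP (R'.bypass.fst_mem_support_of_mem_edges h)
    · exact hvS (hAS v (A.snd_mem_support_of_mem_edges h))
  refine ⟨w, .cons hwv (R'.bypass.append A), (Walk.cons_isCycle_iff _ hwv).mpr ⟨hPA, hedge⟩,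
    ?_, ?_⟩ <;> simp [Walk.mem_support_append_iff, huA]

/-- Induction on `dist u v`, through the predecessor `w` of `v` on a geodesic: `u` and `w` are
adjacent or lie on a common cycle, and a `v`–`u` walk avoiding `w` closes this up into a cycle
through `v`. -/
theorem onCommonCycle_of_forall_not_separates {u v : V} (huv : 2 ≤ G.dist u v)
    (hsep : ∀ s, s ≠ u → s ≠ v → ¬ G.Separates s u v) : G.OnCommonCycle u v := by
  induction hn : G.dist u v using Nat.strong_induction_on generalizing v with
  | _ n ih =>
    have hreach : G.Reachable u v := Reachable.of_dist_ne_zero (by omega)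
    have hne : u ≠ v := by rintro rfl; simp at huv
    obtain ⟨w, hwv, hw⟩ := hreach.exists_adj_dist_add_one hne
    have hwu : w ≠ u := by rintro rfl; rw [dist_self] at hw; omega
    obtain ⟨R, hwR⟩ : ∃ R : G.Walk v u, w ∉ R.support := by
      obtain ⟨p, hp⟩ : ∃ p : G.Walk u v, w ∉ p.support := by
        simpa [Separates] using hsep w hwu hwv.ne
      exact ⟨p.reverse, by simpa using hp⟩
    rcases huv.eq_or_lt with h2 | hn3
    · have huw : G.Adj u w := dist_eq_one_iff_adj.mp (by omega)
      refine onCommonCycle_of_arcs (S := {u, w}) hwv (by simp [hne.symm, hwv.ne.symm]) ?_ R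
        (by simp) hwR
      rintro y (rfl | rfl) hyw
      · exact ⟨huw.toWalk, .of_adj huw, by simp, by simp⟩
      · exact absurd rfl hyw
    have hsep' : ∀ s, s ≠ u → s ≠ w → ¬ G.Separates s u w := by
      intro s hsu hsw hs
      by_cases hsv : s = v
      · subst hsv
        have := hs.dist_eq_add (hreach.trans hwv.symm.reachable)
        omega
      · obtain ⟨p, hp⟩ : ∃ p : G.Walk u v, s ∉ p.support := by
          simpa [Separates] using hsep s hsu hsv
        have := hs (p.concat hwv.symm)
        simp_all [Walk.support_concat]
    obtain ⟨a, Z, hZ, huZ, hwZ⟩ := ih (G.dist u w) (by omega) (by omega) hsep' rfl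
    by_cases hvZ : v ∈ Z.support
    · exact ⟨a, Z, hZ, huZ, hvZ⟩
    · exact onCommonCycle_of_arcs (S := {t | t ∈ Z.support}) hwv hvZ
        (fun y hy hyw => hZ.exists_isPath_mem_support hy hwZ huZ hyw) R huZ hwR

lemma Connected.exists_separates_dist_lt (hconn : G.Connected) {k : ℕ} (hk : 2 ≤ k)
    (hcyc : ∀ a b, G.OnCommonCycle a b → G.dist a b < k) {z x : V} (hzx : k ≤ G.dist z x) :
    ∃ c, c ≠ z ∧ c ≠ x ∧ G.Separates c z x ∧ G.dist z c < k := by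
  induction hn : G.dist z x using Nat.strong_induction_on generalizing x with
  | _ n ih =>
    obtain ⟨c, hcz, hcx, hc⟩ : ∃ c, c ≠ z ∧ c ≠ x ∧ G.Separates c z x := by
      by_contra! hsep
      exact absurd (hcyc z x (onCommonCycle_of_forall_not_separates (by omega) hsep)) (by omega)
    by_cases hzc : G.dist z c < k
    · exact ⟨c, hcz, hcx, hc, hzc⟩
    have hsplit := hc.dist_eq_add (hconn z x)
    have hcx' := hconn.pos_dist_of_ne hcx
    obtain ⟨c', hc'z, -, hc', hzc'⟩ := ih (G.dist z c) (by omega) (x := c) (by omega) rfl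
    exact ⟨c', hc'z, by rintro rfl; omega, hc'.trans hc, hzc'⟩

end SimpleGraph

/-- A finite connected graph with d ≤ 2r - 2 has circumference at least
4r - 2d ≥ 4; in particular it has a cycle of length at least 4. -/
theorem stmt_11 {V : Type*} [Fintype V] (G : SimpleGraph V) (hconn : G.Connected)
    (r d : ℕ) (hr : r = rad G) (hd : d = diamG G) (h : d + 2 ≤ 2 * r) :
    4 ≤ 4 * r - 2 * d ∧
      ∃ (v : V) (c : G.Walk v v), c.IsCycle ∧ 4 * r - 2 * d ≤ c.length := by
  subst hr hd
  have : Nonempty V := hconn.nonempty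
  obtain ⟨z, hz⟩ := exists_ecc_eq_rad G
  obtain ⟨x, hx⟩ := exists_dist_eq_ecc G z
  have hrd := hz ▸ ecc_le_diamG G z
  refine ⟨by omega, ?_⟩
  by_contra! hshort
  have hcyc : ∀ a b, G.OnCommonCycle a b → G.dist a b < 2 * rad G - diamG G := by
    rintro a b ⟨_, c, hc, ha, hb⟩
    have := c.two_mul_dist_le_length ha hb
    have := hshort _ c hc
    omega
  obtain ⟨c, hcz, -, hsep, hzc⟩ :=
    hconn.exists_separates_dist_lt (by omega) hcyc (z := z) (x := x) (by omega)
  obtain ⟨u, hu⟩ := exists_dist_eq_ecc G c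
  have hcu := hu ▸ rad_le_ecc G c
  have hzu := hz ▸ dist_le_ecc G z u
  have hxu := (dist_le_ecc G x u).trans (ecc_le_diamG G x)
  have hzcx := hsep.dist_eq_add (hconn z x)
  have hzc0 := hconn.pos_dist_of_ne hcz.symm
  by_cases hczu : G.Separates c z u
  · have := hczu.dist_eq_add (hconn z u)
    omega
  · have := (hsep.of_not_separates hczu).dist_eq_add (hconn x u)
    rw [dist_comm (u := x) (v := c)] at this
    omega
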